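/- arXiv:2110.09476 — 7 statements merged into one kernel-verified Lean document; each statement's English description precedes it below -/
import Mathlib

section
/- Let β, ζ > 0 and let ψ_i, ψ_j be one-dimensional Gaussian measures with means x_i, x_j ∈ ℝ and common variance β². Then the squared maximum mean discrepancy between ψ_i and ψ_j with respect to the Gaussian kernel g_ζ(x,y) = exp(-(x-y)²/ζ) equals 2·(ζ/(4β²+ζ))^{1/2}·(1 - exp(-(x_i - x_j)²/(4β²+ζ))). In particular, the MMD between two Gaussians of equal variance is a strictly increasing function of the distance between their means. -/
open MeasureTheory Real

/-- Density of a 1-D Gaussian with mean `a` and variance `β²`. -/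
noncomputable def gaussDensity (β a x : ℝ) : ℝ :=
  (2 * Real.pi * β ^ 2) ^ (-(1 : ℝ) / 2) * Real.exp (-(x - a) ^ 2 / (2 * β ^ 2))

/-- Squared MMD between the Gaussians `ψ_a`, `ψ_b` (means `a`, `b`, variance `β²`)
with respect to the Gaussian kernel of bandwidth `ζ`, written via double integrals
against the densities. -/
noncomputable def gaussMMD2 (β ζ a b : ℝ) : ℝ :=
  (∫ x : ℝ, ∫ y : ℝ, Real.exp (-(x - y) ^ 2 / ζ) * gaussDensity β a x * gaussDensity β a y)
  + (∫ x : ℝ, ∫ y : ℝ, Real.exp (-(x - y) ^ 2 / ζ) * gaussDensity β b x * gaussDensity β b y)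
  - 2 * ∫ x : ℝ, ∫ y : ℝ, Real.exp (-(x - y) ^ 2 / ζ) * gaussDensity β a x * gaussDensity β b y

lemma conv_exp (c s x b : ℝ) (hc : 0 < c) (hs : 0 < s) :
    ∫ y : ℝ, Real.exp (-(x - y) ^ 2 / c) * Real.exp (-(y - b) ^ 2 / s)
      = Real.sqrt (Real.pi * c * s / (c + s)) * Real.exp (-(x - b) ^ 2 / (c + s)) := by
  have hcs : 0 < c + s := by linarith
  set p := (c + s) / (c * s) with hpdef
  have hp : 0 < p := div_pos hcs (mul_pos hc hs)
  set m := (s * x + c * b) / (c + s) with hmdef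
  have key : ∀ y : ℝ, Real.exp (-(x - y) ^ 2 / c) * Real.exp (-(y - b) ^ 2 / s)
      = Real.exp (-(x - b) ^ 2 / (c + s)) * Real.exp (-p * (y - m) ^ 2) := by
    intro y
    rw [← Real.exp_add, ← Real.exp_add]
    congr 1
    rw [hpdef, hmdef]
    field_simp
    ring
  simp_rw [key, MeasureTheory.integral_const_mul]
  have h1 : ∫ y : ℝ, Real.exp (-p * (y - m) ^ 2) = Real.sqrt (Real.pi / p) := by
    rw [← integral_gaussian p]
    exact integral_sub_right_eq_self (fun y => Real.exp (-p * y ^ 2)) m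
  rw [h1]
  have h2 : Real.pi / p = Real.pi * c * s / (c + s) := by
    rw [hpdef]; field_simp
  rw [h2, mul_comm]

lemma conv_density (β c x b : ℝ) (hβ : 0 < β) (hc : 0 < c) :
    ∫ y : ℝ, Real.exp (-(x - y) ^ 2 / c) * gaussDensity β b y
      = Real.sqrt (c / (c + 2 * β ^ 2)) * Real.exp (-(x - b) ^ 2 / (c + 2 * β ^ 2)) := by
  have hs : 0 < 2 * β ^ 2 := by positivity
  have hA : (0 : ℝ) < 2 * Real.pi * β ^ 2 := by positivity
  unfold gaussDensity
  have rearr : ∀ y : ℝ, Real.exp (-(x - y) ^ 2 / c) *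
      ((2 * Real.pi * β ^ 2) ^ (-(1 : ℝ) / 2) * Real.exp (-(y - b) ^ 2 / (2 * β ^ 2)))
      = (2 * Real.pi * β ^ 2) ^ (-(1 : ℝ) / 2) *
        (Real.exp (-(x - y) ^ 2 / c) * Real.exp (-(y - b) ^ 2 / (2 * β ^ 2))) := by
    intro y; ring
  simp_rw [rearr, MeasureTheory.integral_const_mul]
  rw [conv_exp c (2 * β ^ 2) x b hc hs]
  have hN : (2 * Real.pi * β ^ 2) ^ (-(1 : ℝ) / 2)
      = (Real.sqrt (2 * Real.pi * β ^ 2))⁻¹ := by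
    rw [show (-(1 : ℝ) / 2) = -(1 / 2) by ring, Real.rpow_neg hA.le, ← Real.sqrt_eq_rpow]
  have hB : (0 : ℝ) ≤ Real.pi * c * (2 * β ^ 2) / (c + 2 * β ^ 2) := by positivity
  have hsq : Real.sqrt (c / (c + 2 * β ^ 2))
      = Real.sqrt (Real.pi * c * (2 * β ^ 2) / (c + 2 * β ^ 2)) /
        Real.sqrt (2 * Real.pi * β ^ 2) := by
    rw [← Real.sqrt_div' _ ?_]
    · congr 1
      field_simp
    · positivity
  rw [hN, hsq]
  have hAs : Real.sqrt (2 * Real.pi * β ^ 2) ≠ 0 := by positivity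
  field_simp

lemma double_integral (β ζ a b : ℝ) (hβ : 0 < β) (hζ : 0 < ζ) :
    (∫ x : ℝ, ∫ y : ℝ, Real.exp (-(x - y) ^ 2 / ζ) * gaussDensity β a x * gaussDensity β b y)
      = Real.sqrt (ζ / (4 * β ^ 2 + ζ)) * Real.exp (-(a - b) ^ 2 / (4 * β ^ 2 + ζ)) := by
  have hD1 : 0 < ζ + 2 * β ^ 2 := by positivity
  have inner : ∀ x : ℝ,
      (∫ y : ℝ, Real.exp (-(x - y) ^ 2 / ζ) * gaussDensity β a x * gaussDensity β b y)
      = gaussDensity β a x * (Real.sqrt (ζ / (ζ + 2 * β ^ 2)) *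
          Real.exp (-(x - b) ^ 2 / (ζ + 2 * β ^ 2))) := by
    intro x
    have : ∀ y : ℝ, Real.exp (-(x - y) ^ 2 / ζ) * gaussDensity β a x * gaussDensity β b y
        = gaussDensity β a x * (Real.exp (-(x - y) ^ 2 / ζ) * gaussDensity β b y) := by
      intro y; ring
    simp_rw [this, MeasureTheory.integral_const_mul, conv_density β ζ x b hβ hζ]
  simp_rw [inner]
  have rearr : ∀ x : ℝ, gaussDensity β a x * (Real.sqrt (ζ / (ζ + 2 * β ^ 2)) *
      Real.exp (-(x - b) ^ 2 / (ζ + 2 * β ^ 2)))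
      = Real.sqrt (ζ / (ζ + 2 * β ^ 2)) *
        (Real.exp (-(b - x) ^ 2 / (ζ + 2 * β ^ 2)) * gaussDensity β a x) := by
    intro x
    rw [show (b - x) ^ 2 = (x - b) ^ 2 by ring]
    ring
  simp_rw [rearr, MeasureTheory.integral_const_mul,
    conv_density β (ζ + 2 * β ^ 2) b a hβ hD1]
  have h1 : Real.sqrt (ζ / (ζ + 2 * β ^ 2)) *
      Real.sqrt ((ζ + 2 * β ^ 2) / (ζ + 2 * β ^ 2 + 2 * β ^ 2))
      = Real.sqrt (ζ / (4 * β ^ 2 + ζ)) := by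
    rw [← Real.sqrt_mul (by positivity)]
    congr 1
    rw [div_mul_div_comm, show ζ + 2 * β ^ 2 + 2 * β ^ 2 = 4 * β ^ 2 + ζ by ring,
      mul_comm ζ (ζ + 2 * β ^ 2), mul_div_mul_left _ _ hD1.ne']
  have h2 : (-(b - a) ^ 2 / (ζ + 2 * β ^ 2 + 2 * β ^ 2))
      = (-(a - b) ^ 2 / (4 * β ^ 2 + ζ)) := by
    rw [show (b - a) ^ 2 = (a - b) ^ 2 by ring,
      show ζ + 2 * β ^ 2 + 2 * β ^ 2 = 4 * β ^ 2 + ζ by ring]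
  rw [← mul_assoc, h1, h2]

/-- Closed form of the squared MMD between equal-variance Gaussians, and strict
monotonicity of the MMD in the distance between the means. -/
theorem stmt_1 (β ζ xi xj : ℝ) (hβ : 0 < β) (hζ : 0 < ζ) :
    gaussMMD2 β ζ xi xj
        = 2 * (ζ / (4 * β ^ 2 + ζ)) ^ ((1 : ℝ) / 2) *
            (1 - Real.exp (-(xi - xj) ^ 2 / (4 * β ^ 2 + ζ))) ∧
      StrictMonoOn (fun d : ℝ =>
          Real.sqrt (2 * (ζ / (4 * β ^ 2 + ζ)) ^ ((1 : ℝ) / 2) *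
            (1 - Real.exp (-d ^ 2 / (4 * β ^ 2 + ζ)))))
        (Set.Ici (0 : ℝ)) := by
  have hD : 0 < 4 * β ^ 2 + ζ := by positivity
  have hC : (0 : ℝ) < (ζ / (4 * β ^ 2 + ζ)) ^ ((1 : ℝ) / 2) :=
    Real.rpow_pos_of_pos (div_pos hζ hD) _
  constructor
  · unfold gaussMMD2
    rw [double_integral β ζ xi xi hβ hζ, double_integral β ζ xj xj hβ hζ,
      double_integral β ζ xi xj hβ hζ, ← Real.sqrt_eq_rpow]
    simp only [sub_self]
    norm_num
    ring
  · intro u hu v hv huv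
    simp only
    apply Real.sqrt_lt_sqrt
    · apply mul_nonneg (by positivity)
      rw [sub_nonneg, Real.exp_le_one_iff]
      have : (0:ℝ) ≤ u ^ 2 := by positivity
      rw [neg_div]
      simp only [Left.neg_nonpos_iff]
      positivity
    · have h1 : u ^ 2 < v ^ 2 := by
        apply pow_lt_pow_left₀ huv hu
        norm_num
      have h2 : Real.exp (-v ^ 2 / (4 * β ^ 2 + ζ)) < Real.exp (-u ^ 2 / (4 * β ^ 2 + ζ)) := by
        apply Real.exp_lt_exp.mpr
        rw [div_lt_div_iff_of_pos_right hD]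
        linarith
      have hCpos : (0:ℝ) < 2 * (ζ / (4 * β ^ 2 + ζ)) ^ ((1 : ℝ) / 2) := by linarith
      have := sub_lt_sub_left h2 1
      nlinarith
end

section
/- For β, ζ > 0 define η = 4β² + ζ. Then for any two one-dimensional Gaussian measures ψ_i, ψ_j with means x_i, x_j and common variance β², the squared MMD with respect to the Gaussian kernel of bandwidth ζ can be written as ρ²(ψ_i, ψ_j) = C·(1 - g(x_i, x_j)), where g(x,y) = exp(-(x-y)²/η) is the Gaussian kernel of bandwidth η and C = 2·(ζ/η)^{1/2} is a constant independent of x_i, x_j. Hence the MMD-distance matrix between the KDE component measures is an affine transformation of the Gaussian kernel matrix of bandwidth η evaluated on the data points. -/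
open MeasureTheory Real

/-!
Both Gaussian factors in `∫ exp (-(x - y)² / c) · gaussDensity β b y dy` combine, after completing
the square in `y`, into a Gaussian in `y` times `exp (-(x - b)² / (c + 2β²))`, so this convolution
is `√(c / (c + 2β²)) · exp (-(x - b)² / (c + 2β²))`. Applying it twice, first with `c = ζ` and then
with `c = ζ + 2β²`, gives every cross term of the MMD as `√(ζ / η) · exp (-(a - b)² / η)` with
`η = 4β² + ζ`; the two diagonal terms are then `√(ζ / η)`.
-/

theorem integral_exp_neg_mul_sub_sq (A m : ℝ) :
    ∫ y : ℝ, exp (-A * (y - m) ^ 2) = √(π / A) := by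
  rw [integral_sub_right_eq_self (fun y => exp (-A * y ^ 2)) m, integral_gaussian]

theorem rpow_neg_one_div_two_eq_inv_sqrt {x : ℝ} (hx : 0 ≤ x) :
    x ^ (-(1 : ℝ) / 2) = (√x)⁻¹ := by
  rw [sqrt_eq_rpow, ← rpow_neg hx, neg_div]

theorem exp_neg_sq_div_mul_exp_neg_sq_div {β c : ℝ} (hβ : β ≠ 0) (hc : 0 < c) (x b y : ℝ) :
    exp (-(x - y) ^ 2 / c) * exp (-(y - b) ^ 2 / (2 * β ^ 2))
      = exp (-(x - b) ^ 2 / (c + 2 * β ^ 2))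
        * exp (-((c + 2 * β ^ 2) / (2 * β ^ 2 * c))
            * (y - (2 * β ^ 2 * x + c * b) / (c + 2 * β ^ 2)) ^ 2) := by
  have : 0 < c + 2 * β ^ 2 := by positivity
  rw [← exp_add, ← exp_add]
  congr 1
  field_simp
  ring

theorem integral_exp_neg_sq_div_mul_gaussDensity {β c : ℝ} (hβ : β ≠ 0) (hc : 0 < c) (x b : ℝ) :
    ∫ y : ℝ, exp (-(x - y) ^ 2 / c) * gaussDensity β b y
      = √(c / (c + 2 * β ^ 2)) * exp (-(x - b) ^ 2 / (c + 2 * β ^ 2)) := by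
  have hsum : 0 < c + 2 * β ^ 2 := by positivity
  simp_rw [gaussDensity, mul_left_comm (exp _), exp_neg_sq_div_mul_exp_neg_sq_div hβ hc,
    integral_const_mul, integral_exp_neg_mul_sub_sq,
    rpow_neg_one_div_two_eq_inv_sqrt (by positivity : 0 ≤ 2 * π * β ^ 2)]
  rw [mul_comm (exp _), ← mul_assoc, ← sqrt_inv, ← sqrt_mul (by positivity)]
  congr 2
  field_simp

theorem integral_integral_exp_neg_sq_div_mul_gaussDensity {β ζ : ℝ} (hβ : β ≠ 0) (hζ : 0 < ζ)
    (a b : ℝ) :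
    ∫ x : ℝ, ∫ y : ℝ, exp (-(x - y) ^ 2 / ζ) * gaussDensity β a x * gaussDensity β b y
      = √(ζ / (4 * β ^ 2 + ζ)) * exp (-(a - b) ^ 2 / (4 * β ^ 2 + ζ)) := by
  have hζ' : 0 < ζ + 2 * β ^ 2 := by positivity
  simp_rw [mul_right_comm _ (gaussDensity β a _), integral_mul_const,
    integral_exp_neg_sq_div_mul_gaussDensity hβ hζ, mul_assoc, integral_const_mul, sub_sq_comm _ b,
    integral_exp_neg_sq_div_mul_gaussDensity hβ hζ', ← mul_assoc,
    ← sqrt_mul (div_nonneg hζ.le hζ'.le)]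
  rw [div_mul_div_cancel₀ hζ'.ne', show ζ + 2 * β ^ 2 + 2 * β ^ 2 = 4 * β ^ 2 + ζ by ring]

/-- With `η = 4β² + ζ`, the squared MMD between the KDE component measures equals
`C·(1 − g(x_i, x_j))` where `g` is the Gaussian kernel of bandwidth `η` and
`C = 2·(ζ/η)^{1/2}` is a constant independent of the data points. -/
theorem stmt_2 (β ζ : ℝ) (hβ : 0 < β) (hζ : 0 < ζ) :
    ∃ C : ℝ, C = 2 * (ζ / (4 * β ^ 2 + ζ)) ^ ((1 : ℝ) / 2) ∧
      ∀ xi xj : ℝ, gaussMMD2 β ζ xi xj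
        = C * (1 - Real.exp (-(xi - xj) ^ 2 / (4 * β ^ 2 + ζ))) := by
  refine ⟨_, rfl, fun xi xj => ?_⟩
  simp only [gaussMMD2, integral_integral_exp_neg_sq_div_mul_gaussDensity hβ.ne' hζ, sub_self,
    ← sqrt_eq_rpow]
  norm_num
  ring
end

section
/- Let (M, ρ) be a metric space and p_1, …, p_n ∈ M with a partition σ': [n] → [K] into nonempty clusters with centers μ_k (the means/medoids used by the algorithm) satisfying ρ(p_i, μ_{σ'(i)}) ≤ r for all i and ρ(μ_k, μ_{k'}) > 4r for all k ≠ k'. If σ̂: [n] → [K] is any partition whose k-center objective satisfies max_i ρ(p_i, ν_{σ̂(i)}) ≤ r for some centers ν_1, …, ν_K ∈ M, then σ̂ coincides with σ' up to a permutation of labels. -/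
/-- k-center recovery: if the planted partition `σ'` has nonempty clusters with
centers `μ_k` of radius at most `r` that are pairwise more than `4r` apart, then
any partition `σ̂` achieving k-center radius at most `r` (with some centers `ν`)
coincides with `σ'` up to a permutation of the labels. -/
theorem stmt_4 {M : Type*} [MetricSpace M] {n K : ℕ}
    (p : Fin n → M) (σ' σhat : Fin n → Fin K) (μ ν : Fin K → M) (r : ℝ)
    (hne : Function.Surjective σ')
    (h1 : ∀ i, dist (p i) (μ (σ' i)) ≤ r)
    (hsep : ∀ k k', k ≠ k' → 4 * r < dist (μ k) (μ k'))
    (hhat : ∀ i, dist (p i) (ν (σhat i)) ≤ r) :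
    ∃ π : Equiv.Perm (Fin K), ∀ i, σhat i = π (σ' i) := by
  -- key: same σhat label implies same σ' label
  have key : ∀ i j : Fin n, σhat i = σhat j → σ' i = σ' j := by
    intro i j hij
    by_contra hne'
    have hlt := hsep _ _ hne'
    have hb : dist (μ (σ' i)) (μ (σ' j)) ≤
        dist (μ (σ' i)) (p i) + dist (p i) (ν (σhat i)) +
        dist (ν (σhat j)) (p j) + dist (p j) (μ (σ' j)) := by
      rw [hij]
      calc dist (μ (σ' i)) (μ (σ' j))
          ≤ dist (μ (σ' i)) (p i) + dist (p i) (μ (σ' j)) := dist_triangle _ _ _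
        _ ≤ dist (μ (σ' i)) (p i) + (dist (p i) (ν (σhat j)) + dist (ν (σhat j)) (μ (σ' j))) := by
            gcongr; exact dist_triangle _ _ _
        _ ≤ dist (μ (σ' i)) (p i) + (dist (p i) (ν (σhat j)) +
              (dist (ν (σhat j)) (p j) + dist (p j) (μ (σ' j)))) := by
            gcongr; exact dist_triangle _ _ _
        _ = _ := by ring
    have h1i := h1 i
    have h1j := h1 j
    have hhi := hhat i
    have hhj := hhat j
    rw [dist_comm] at h1i
    rw [dist_comm] at hhj
    linarith
  classical
  set f : Fin K → Fin K := fun l =>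
    if h : ∃ i, σhat i = l then σ' h.choose else l with hf
  have hfval : ∀ i, f (σhat i) = σ' i := by
    intro i
    have h : ∃ j, σhat j = σhat i := ⟨i, rfl⟩
    simp only [hf, dif_pos h]
    exact key _ _ h.choose_spec
  have hsurj : Function.Surjective f := by
    intro k
    obtain ⟨i, hi⟩ := hne k
    exact ⟨σhat i, by rw [hfval, hi]⟩
  have hbij : Function.Bijective f := Finite.surjective_iff_bijective.mp hsurj
  refine ⟨(Equiv.ofBijective f hbij).symm, fun i => ?_⟩
  have : (Equiv.ofBijective f hbij) (σhat i) = σ' i := hfval i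
  rw [← this, Equiv.symm_apply_apply]
end

section
/- Let (M, ρ) be a metric space and p_1, …, p_n ∈ M with a partition σ: [n] → [K] into nonempty clusters. Let δ = max over k of the diameter of cluster k, i.e. δ = max_{k} max_{σ(i)=σ(j)=k} ρ(p_i, p_j). Suppose additionally each cluster k has a representative γ_k and cluster mean μ_k with ρ(μ_k, γ_k) ≤ s for all k, ρ(p_i, μ_{σ(i)}) ≤ δ for all i, and ρ(γ_k, γ_{k'}) > 3δ + 2s for all k ≠ k'. Then for all i, j: σ(i) = σ(j) if and only if ρ(p_i, p_j) ≤ δ. -/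
/-- Linkage separation characterization: if `δ` is the maximal within-cluster
diameter, every point is within `δ` of its cluster mean, cluster means are
within `s` of the component representatives, and representatives of distinct
components are more than `3δ + 2s` apart, then two points lie in the same
cluster if and only if their distance is at most `δ`. -/
theorem stmt_5 {M : Type*} [MetricSpace M] {n K : ℕ}
    (p : Fin n → M) (σ : Fin n → Fin K) (μ γ : Fin K → M) (δ s : ℝ)
    (hne : Function.Surjective σ)
    (hδ : IsGreatest {d : ℝ | ∃ i j, σ i = σ j ∧ d = dist (p i) (p j)} δ)
    (hμγ : ∀ k, dist (μ k) (γ k) ≤ s)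
    (hpc : ∀ i, dist (p i) (μ (σ i)) ≤ δ)
    (hsep : ∀ k k', k ≠ k' → 3 * δ + 2 * s < dist (γ k) (γ k')) :
    ∀ i j, σ i = σ j ↔ dist (p i) (p j) ≤ δ := by
  intro i j
  constructor
  · intro h
    exact hδ.2 ⟨i, j, h, rfl⟩
  · intro h
    by_contra hne'
    have hs := hsep (σ i) (σ j) hne'
    have h1 : dist (γ (σ i)) (γ (σ j)) ≤
        dist (γ (σ i)) (μ (σ i)) + dist (μ (σ i)) (p i) + dist (p i) (p j)
        + dist (p j) (μ (σ j)) + dist (μ (σ j)) (γ (σ j)) := by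
      calc dist (γ (σ i)) (γ (σ j)) ≤ dist (γ (σ i)) (p i) + dist (p i) (γ (σ j)) :=
            dist_triangle _ _ _
        _ ≤ (dist (γ (σ i)) (μ (σ i)) + dist (μ (σ i)) (p i)) +
            (dist (p i) (p j) + dist (p j) (γ (σ j))) := by
            gcongr <;> exact dist_triangle _ _ _
        _ ≤ _ := by
            have := dist_triangle (p j) (μ (σ j)) (γ (σ j))
            linarith
    have h2 : dist (γ (σ i)) (μ (σ i)) ≤ s := by rw [dist_comm]; exact hμγ _
    have h3 : dist (μ (σ i)) (p i) ≤ δ := by rw [dist_comm]; exact hpc _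
    have h4 : dist (p j) (μ (σ j)) ≤ δ := hpc _
    have h5 := hμγ (σ j)
    linarith
end

section
/- Let points p_1, …, p_n in a metric space be partitioned by σ: [n] → [K] such that every within-cluster distance is at most δ and every between-cluster distance is strictly greater than δ. Then single-linkage agglomerative clustering, stopped when exactly K clusters remain, recovers the partition σ up to a permutation of labels. -/
open Finset

/-- Single-linkage similarity between two clusters: the minimal pairwise distance. -/
noncomputable def singleLink {M : Type*} [MetricSpace M] {n : ℕ} (p : Fin n → M)
    (c c' : Finset (Fin n)) : ℝ :=
  sInf {d : ℝ | ∃ i ∈ c, ∃ j ∈ c', d = dist (p i) (p j)}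

/-- One step of agglomerative clustering with linkage `L`: merge two distinct
clusters of the current partition minimizing `L`. -/
def AgglomStep {n : ℕ} (L : Finset (Fin n) → Finset (Fin n) → ℝ)
    (P Q : Finset (Finset (Fin n))) : Prop :=
  ∃ c ∈ P, ∃ c' ∈ P, c ≠ c' ∧
    (∀ a ∈ P, ∀ b ∈ P, a ≠ b → L c c' ≤ L a b) ∧
    Q = insert (c ∪ c') ((P.erase c).erase c')

lemma singleLink_le {M : Type*} [MetricSpace M] {n : ℕ} (p : Fin n → M)
    {c c' : Finset (Fin n)} {i j : Fin n} (hi : i ∈ c) (hj : j ∈ c') :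
    singleLink p c c' ≤ dist (p i) (p j) := by
  refine csInf_le ⟨0, ?_⟩ ⟨i, hi, j, hj, rfl⟩
  rintro d ⟨a, -, b, -, rfl⟩
  exact dist_nonneg

lemma exists_singleLink_eq {M : Type*} [MetricSpace M] {n : ℕ} (p : Fin n → M)
    {c c' : Finset (Fin n)} (hc : c.Nonempty) (hc' : c'.Nonempty) :
    ∃ i ∈ c, ∃ j ∈ c', singleLink p c c' = dist (p i) (p j) := by
  have hfin : {d : ℝ | ∃ i ∈ c, ∃ j ∈ c', d = dist (p i) (p j)}.Finite := by
    apply Set.Finite.subset (((c ×ˢ c').finite_toSet).image fun q => dist (p q.1) (p q.2))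
    rintro d ⟨i, hi, j, hj, rfl⟩
    exact ⟨(i, j), by simp [hi, hj], rfl⟩
  obtain ⟨i0, hi0⟩ := hc
  obtain ⟨j0, hj0⟩ := hc'
  have hnes : {d : ℝ | ∃ i ∈ c, ∃ j ∈ c', d = dist (p i) (p j)}.Nonempty :=
    ⟨_, ⟨i0, hi0, j0, hj0, rfl⟩⟩
  exact hnes.csInf_mem hfin

/-- The invariant maintained by the algorithm: clusters are nonempty, cover
everything, are pairwise disjoint, and are pure w.r.t. `σ`. -/
def SLInv {n K : ℕ} (σ : Fin n → Fin K) (P : Finset (Finset (Fin n))) : Prop :=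
  (∀ c ∈ P, c.Nonempty) ∧ (∀ i : Fin n, ∃ c ∈ P, i ∈ c) ∧
  (∀ c ∈ P, ∀ c' ∈ P, c ≠ c' → Disjoint c c') ∧
  (∀ c ∈ P, ∀ i ∈ c, ∀ j ∈ c, σ i = σ j)

lemma slinv_step {M : Type*} [MetricSpace M] {n K : ℕ}
    (p : Fin n → M) (σ : Fin n → Fin K) (δ : ℝ)
    (hwithin : ∀ i j, σ i = σ j → dist (p i) (p j) ≤ δ)
    (hbetween : ∀ i j, σ i ≠ σ j → δ < dist (p i) (p j))
    {P Q : Finset (Finset (Fin n))} (hK : K < P.card)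
    (hP : SLInv σ P) (hstep : AgglomStep (singleLink p) P Q) : SLInv σ Q := by
  obtain ⟨hPne, hPcov, hPdisj, hPpure⟩ := hP
  obtain ⟨c, hc, c', hc', hcc', hmin, rfl⟩ := hstep
  -- pigeonhole: two distinct clusters with the same label
  have hcne := hPne c hc
  have hc'ne := hPne c' hc'
  obtain ⟨i0, hi0⟩ := hcne
  set f : Finset (Fin n) → Fin K := fun a => if h : a.Nonempty then σ h.choose else σ i0 with hf
  obtain ⟨a, ha, b, hb, hab, hfab⟩ :
      ∃ a ∈ P, ∃ b ∈ P, a ≠ b ∧ f a = f b := by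
    apply Finset.exists_ne_map_eq_of_card_lt_of_maps_to (t := (Finset.univ : Finset (Fin K)))
    · simpa using hK
    · intro a _; exact Finset.mem_univ _
  have hane := hPne a ha
  have hbne := hPne b hb
  -- f a is the common label of a, f b of b
  have hfa : ∀ x ∈ a, σ x = f a := by
    intro x hx
    rw [hf]; simp only [hane, dif_pos]
    exact hPpure a ha x hx _ hane.choose_spec
  have hfb : ∀ x ∈ b, σ x = f b := by
    intro x hx
    rw [hf]; simp only [hbne, dif_pos]
    exact hPpure b hb x hx _ hbne.choose_spec
  -- singleLink a b ≤ δ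
  obtain ⟨ia, hia⟩ := hane
  obtain ⟨ib, hib⟩ := hbne
  have hLab : singleLink p a b ≤ δ := by
    refine le_trans (singleLink_le p hia hib) (hwithin _ _ ?_)
    rw [hfa ia hia, hfb ib hib, hfab]
  have hLcc' : singleLink p c c' ≤ δ := le_trans (hmin a ha b hb hab) hLab
  -- the merged clusters have the same label
  obtain ⟨ic, hic, ic', hic', heq⟩ := exists_singleLink_eq p ⟨i0, hi0⟩ (hPne c' hc')
  have hlbl : σ ic = σ ic' := by
    by_contra hcon
    exact absurd (heq ▸ hLcc') (not_le.mpr (hbetween _ _ hcon))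
  -- purity of the union
  have hupure : ∀ x ∈ c ∪ c', σ x = σ ic := by
    intro x hx
    rcases Finset.mem_union.mp hx with hx | hx
    · exact hPpure c hc x hx ic hic
    · exact (hPpure c' hc' x hx ic' hic').trans hlbl.symm
  refine ⟨?_, ?_, ?_, ?_⟩
  · intro d hd
    rcases Finset.mem_insert.mp hd with rfl | hd
    · exact ⟨i0, Finset.mem_union_left _ hi0⟩
    · exact hPne d (Finset.mem_of_mem_erase (Finset.mem_of_mem_erase hd))
  · intro i
    obtain ⟨d, hd, hid⟩ := hPcov i
    by_cases hdc : d = c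
    · exact ⟨c ∪ c', Finset.mem_insert_self _ _, Finset.mem_union_left _ (hdc ▸ hid)⟩
    by_cases hdc' : d = c'
    · exact ⟨c ∪ c', Finset.mem_insert_self _ _, Finset.mem_union_right _ (hdc' ▸ hid)⟩
    exact ⟨d, Finset.mem_insert_of_mem (Finset.mem_erase.mpr ⟨hdc',
      Finset.mem_erase.mpr ⟨hdc, hd⟩⟩), hid⟩
  · intro d hd e he hde
    rcases Finset.mem_insert.mp hd with rfl | hd <;>
      rcases Finset.mem_insert.mp he with rfl | he
    · exact absurd rfl hde
    · have he' := Finset.mem_erase.mp he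
      have he'' := Finset.mem_erase.mp he'.2
      exact Finset.disjoint_union_left.mpr
        ⟨hPdisj c hc e he''.2 (Ne.symm he''.1), hPdisj c' hc' e he''.2 (Ne.symm he'.1)⟩
    · have hd' := Finset.mem_erase.mp hd
      have hd'' := Finset.mem_erase.mp hd'.2
      exact (Finset.disjoint_union_left.mpr
        ⟨hPdisj c hc d hd''.2 (Ne.symm hd''.1), hPdisj c' hc' d hd''.2 (Ne.symm hd'.1)⟩).symm
    · exact hPdisj d (Finset.mem_of_mem_erase (Finset.mem_of_mem_erase hd))
        e (Finset.mem_of_mem_erase (Finset.mem_of_mem_erase he)) hde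
  · intro d hd i hi j hj
    rcases Finset.mem_insert.mp hd with rfl | hd
    · rw [hupure i hi, hupure j hj]
    · exact hPpure d (Finset.mem_of_mem_erase (Finset.mem_of_mem_erase hd)) i hi j hj

/-- Single-linkage agglomerative clustering, started from singletons and stopped
when exactly `K` clusters remain, recovers a partition whose within-cluster
distances are at most `δ` and whose between-cluster distances exceed `δ`. -/
theorem stmt_6 {M : Type*} [MetricSpace M] {n K : ℕ}
    (p : Fin n → M) (σ : Fin n → Fin K) (δ : ℝ)
    (hne : Function.Surjective σ)
    (hwithin : ∀ i j, σ i = σ j → dist (p i) (p j) ≤ δ)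
    (hbetween : ∀ i j, σ i ≠ σ j → δ < dist (p i) (p j))
    (P : Finset (Finset (Fin n)))
    (hrun : Relation.ReflTransGen (AgglomStep (singleLink p))
      (Finset.univ.image (fun i : Fin n => ({i} : Finset (Fin n)))) P)
    (hcard : P.card = K) :
    P = Finset.univ.image (fun k : Fin K => Finset.univ.filter (fun i => σ i = k)) := by
  -- invariant holds along the run as long as the cardinality stays ≥ K
  have key : ∀ Q, Relation.ReflTransGen (AgglomStep (singleLink p))
      (Finset.univ.image (fun i : Fin n => ({i} : Finset (Fin n)))) Q →
      K ≤ Q.card → SLInv σ Q := by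
    intro Q hQ
    induction hQ with
    | refl =>
      intro _
      refine ⟨?_, ?_, ?_, ?_⟩
      · intro c hc
        obtain ⟨i, -, rfl⟩ := Finset.mem_image.mp hc
        exact ⟨i, Finset.mem_singleton_self i⟩
      · intro i
        exact ⟨{i}, Finset.mem_image.mpr ⟨i, Finset.mem_univ i, rfl⟩,
          Finset.mem_singleton_self i⟩
      · intro c hc c' hc' hne'
        obtain ⟨i, -, rfl⟩ := Finset.mem_image.mp hc
        obtain ⟨j, -, rfl⟩ := Finset.mem_image.mp hc'
        simp only [Finset.disjoint_singleton]
        intro h; exact hne' (by rw [h])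
      · intro c hc i hi j hj
        obtain ⟨x, -, rfl⟩ := Finset.mem_image.mp hc
        rw [Finset.mem_singleton.mp hi, Finset.mem_singleton.mp hj]
    | @tail R S hQR hstep ih =>
      intro hS
      obtain ⟨c, hc, c', hc', hcc', hmin, rfl⟩ := hstep
      -- card of the new partition is at most R.card - 1
      have hcR : c' ∈ R.erase c := Finset.mem_erase.mpr ⟨Ne.symm hcc', hc'⟩
      have h2 : 2 ≤ R.card := by
        have := Finset.one_lt_card.mpr ⟨c, hc, c', hc', hcc'⟩
        omega
      have hcard' : ((R.erase c).erase c').card = R.card - 2 := by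
        rw [Finset.card_erase_of_mem hcR, Finset.card_erase_of_mem hc]
        omega
      have hle : (insert (c ∪ c') ((R.erase c).erase c')).card ≤ R.card - 1 := by
        calc (insert (c ∪ c') ((R.erase c).erase c')).card
            ≤ ((R.erase c).erase c').card + 1 := Finset.card_insert_le _ _
          _ = R.card - 1 := by omega
      have hKR : K < R.card := by omega
      exact slinv_step p σ δ hwithin hbetween hKR (ih hKR.le)
        ⟨c, hc, c', hc', hcc', hmin, rfl⟩
  have hInv : SLInv σ P := key P hrun (le_of_eq hcard.symm)
  obtain ⟨hPne, hPcov, hPdisj, hPpure⟩ := hInv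
  -- choose representatives
  choose rep hrep using hne
  choose cl hclP hcl using hPcov
  set g : Fin K → Finset (Fin n) := fun k => cl (rep k) with hg
  have hgP : ∀ k, g k ∈ P := fun k => hclP (rep k)
  have hgrep : ∀ k, rep k ∈ g k := fun k => hcl (rep k)
  have hglbl : ∀ k, ∀ x ∈ g k, σ x = k := by
    intro k x hx
    rw [← hrep k]
    exact hPpure _ (hgP k) x hx _ (hgrep k)
  have hginj : Function.Injective g := by
    intro k k' hkk'
    have h1 : σ (rep k) = k' := hglbl k' (rep k) (hkk' ▸ hgrep k)
    rw [hrep k] at h1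
    exact h1
  -- P is the image of g
  have hPg : P = Finset.univ.image g := by
    symm
    apply Finset.eq_of_subset_of_card_le
    · intro c hc
      obtain ⟨k, -, rfl⟩ := Finset.mem_image.mp hc
      exact hgP k
    · rw [Finset.card_image_of_injective _ hginj, Finset.card_univ, Fintype.card_fin, hcard]
  -- each g k equals the fiber of k
  have hgfib : ∀ k, g k = Finset.univ.filter (fun i => σ i = k) := by
    intro k
    apply Finset.Subset.antisymm
    · intro x hx
      simp only [Finset.mem_filter, Finset.mem_univ, true_and]
      exact hglbl k x hx
    · intro j hj
      simp only [Finset.mem_filter, Finset.mem_univ, true_and] at hj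
      have hjc : cl j ∈ P := hclP j
      rw [hPg] at hjc
      obtain ⟨k', -, hk'⟩ := Finset.mem_image.mp hjc
      have hjk' : j ∈ g k' := by rw [hk']; exact hcl j
      have hkk' : k' = k := by rw [← hglbl k' j hjk', hj]
      rwa [hkk'] at hjk'
  rw [hPg]
  apply Finset.image_congr
  intro k _
  exact hgfib k
end

section
/- Let points p_1, …, p_n in a metric space be partitioned by σ: [n] → [K] such that every within-cluster distance is at most δ and every between-cluster distance is strictly greater than δ. Then complete-linkage agglomerative clustering, stopped when exactly K clusters remain, recovers the partition σ up to a permutation of labels. -/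
open Finset

/-- Complete-linkage dissimilarity between two clusters: the maximal pairwise distance. -/
noncomputable def completeLink {M : Type*} [MetricSpace M] {n : ℕ} (p : Fin n → M)
    (c c' : Finset (Fin n)) : ℝ :=
  sSup {d : ℝ | ∃ i ∈ c, ∃ j ∈ c', d = dist (p i) (p j)}

section Aux

variable {M : Type*} [MetricSpace M] {n K : ℕ}

lemma linkSet_bddAbove (p : Fin n → M) (c c' : Finset (Fin n)) :
    BddAbove {d : ℝ | ∃ i ∈ c, ∃ j ∈ c', d = dist (p i) (p j)} := by
  apply Set.Finite.bddAbove
  apply Set.Finite.subset (Set.finite_range (fun q : Fin n × Fin n => dist (p q.1) (p q.2)))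
  rintro d ⟨i, hi, j, hj, rfl⟩
  exact ⟨(i, j), rfl⟩

lemma dist_le_completeLink (p : Fin n → M) {c c' : Finset (Fin n)} {i j : Fin n}
    (hi : i ∈ c) (hj : j ∈ c') : dist (p i) (p j) ≤ completeLink p c c' :=
  le_csSup (linkSet_bddAbove p c c') ⟨i, hi, j, hj, rfl⟩

lemma completeLink_le (p : Fin n → M) {c c' : Finset (Fin n)} {δ : ℝ}
    (hc : c.Nonempty) (hc' : c'.Nonempty)
    (h : ∀ i ∈ c, ∀ j ∈ c', dist (p i) (p j) ≤ δ) : completeLink p c c' ≤ δ := by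
  apply csSup_le
  · obtain ⟨i, hi⟩ := hc; obtain ⟨j, hj⟩ := hc'
    exact ⟨_, i, hi, j, hj, rfl⟩
  · rintro d ⟨i, hi, j, hj, rfl⟩
    exact h i hi j hj

/-- Invariant along the run: all clusters are nonempty, σ-homogeneous, and
form a partition. -/
def IsGood (σ : Fin n → Fin K) (P : Finset (Finset (Fin n))) : Prop :=
  (∀ c ∈ P, c.Nonempty) ∧
  (∀ c ∈ P, ∀ i ∈ c, ∀ j ∈ c, σ i = σ j) ∧
  (∀ i : Fin n, ∃! c, c ∈ P ∧ i ∈ c)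

lemma good_start (σ : Fin n → Fin K) :
    IsGood σ (Finset.univ.image (fun i : Fin n => ({i} : Finset (Fin n)))) := by
  refine ⟨?_, ?_, ?_⟩
  · intro c hc
    obtain ⟨i, -, rfl⟩ := Finset.mem_image.1 hc
    exact ⟨i, Finset.mem_singleton_self i⟩
  · intro c hc i hi j hj
    obtain ⟨x, -, rfl⟩ := Finset.mem_image.1 hc
    rw [Finset.mem_singleton] at hi hj
    rw [hi, hj]
  · intro i
    refine ⟨{i}, ⟨Finset.mem_image.2 ⟨i, Finset.mem_univ i, rfl⟩,
      Finset.mem_singleton_self i⟩, ?_⟩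
    rintro e ⟨he, hie⟩
    obtain ⟨x, -, rfl⟩ := Finset.mem_image.1 he
    rw [Finset.mem_singleton] at hie
    rw [hie]

lemma step_card_le {L : Finset (Fin n) → Finset (Fin n) → ℝ}
    {P Q : Finset (Finset (Fin n))} (h : AgglomStep L P Q) :
    Q.card + 1 ≤ P.card := by
  obtain ⟨c, hc, c', hc', hcc, -, rfl⟩ := h
  have h1 : c' ∈ P.erase c := Finset.mem_erase.2 ⟨Ne.symm hcc, hc'⟩
  have h2 := Finset.card_insert_le (c ∪ c') ((P.erase c).erase c')
  have h3 := Finset.card_erase_of_mem h1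
  have h4 := Finset.card_erase_of_mem hc
  have h5 : 0 < (P.erase c).card := Finset.card_pos.2 ⟨c', h1⟩
  have h6 : 0 < P.card := Finset.card_pos.2 ⟨c, hc⟩
  omega

lemma step_good (p : Fin n → M) (σ : Fin n → Fin K) (δ : ℝ)
    (hwithin : ∀ i j, σ i = σ j → dist (p i) (p j) ≤ δ)
    (hbetween : ∀ i j, σ i ≠ σ j → δ < dist (p i) (p j))
    {P Q : Finset (Finset (Fin n))}
    (hP : IsGood σ P) (hK : K < P.card)
    (hstep : AgglomStep (completeLink p) P Q) : IsGood σ Q := by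
  classical
  obtain ⟨hne, hhom, hpart⟩ := hP
  obtain ⟨c, hc, c', hc', hcc, hmin, rfl⟩ := hstep
  obtain ⟨i0, hi0⟩ := hne c hc
  set g : Finset (Fin n) → Fin K :=
    fun a => σ (if h : a.Nonempty then h.choose else i0) with hg
  have hgval : ∀ a ∈ P, ∀ i ∈ a, g a = σ i := by
    intro a ha i hi
    have hna : a.Nonempty := hne a ha
    have : g a = σ hna.choose := by
      rw [hg]; simp only [dif_pos hna]
    rw [this]
    exact hhom a ha _ hna.choose_spec i hi
  -- pigeonhole: two distinct clusters in the same fiber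
  obtain ⟨a, ha, b, hb, hab, hgab⟩ :=
    Finset.exists_ne_map_eq_of_card_lt_of_maps_to (t := (Finset.univ : Finset (Fin K)))
      (by simpa using hK) (fun a _ => Finset.mem_univ (g a))
  have hsame : ∀ i ∈ a, ∀ j ∈ b, σ i = σ j := by
    intro i hi j hj
    rw [← hgval a ha i hi, ← hgval b hb j hj, hgab]
  have hLab : completeLink p a b ≤ δ :=
    completeLink_le p (hne a ha) (hne b hb)
      (fun i hi j hj => hwithin i j (hsame i hi j hj))
  have hLcc : completeLink p c c' ≤ δ := le_trans (hmin a ha b hb hab) hLab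
  have hcc'same : ∀ i ∈ c, ∀ j ∈ c', σ i = σ j := by
    intro i hi j hj
    by_contra h
    exact absurd (le_trans (dist_le_completeLink p hi hj) hLcc)
      (not_le.2 (hbetween i j h))
  have hmemQ : ∀ d, d ∈ insert (c ∪ c') ((P.erase c).erase c') ↔
      d = c ∪ c' ∨ (d ∈ P ∧ d ≠ c ∧ d ≠ c') := by
    intro d
    simp only [Finset.mem_insert, Finset.mem_erase]
    tauto
  refine ⟨?_, ?_, ?_⟩
  · intro d hd
    rcases (hmemQ d).1 hd with rfl | ⟨hdP, -, -⟩
    · exact ⟨i0, Finset.mem_union_left _ hi0⟩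
    · exact hne d hdP
  · intro d hd i hi j hj
    rcases (hmemQ d).1 hd with rfl | ⟨hdP, -, -⟩
    · rcases Finset.mem_union.1 hi with hi | hi <;>
        rcases Finset.mem_union.1 hj with hj | hj
      · exact hhom c hc i hi j hj
      · exact hcc'same i hi j hj
      · exact (hcc'same j hj i hi).symm
      · exact hhom c' hc' i hi j hj
    · exact hhom d hdP i hi j hj
  · intro i
    obtain ⟨d, ⟨hdP, hid⟩, huniq⟩ := hpart i
    by_cases hdc : d = c ∨ d = c'
    · refine ⟨c ∪ c', ⟨Finset.mem_insert_self _ _, ?_⟩, ?_⟩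
      · rcases hdc with rfl | rfl
        · exact Finset.mem_union_left _ hid
        · exact Finset.mem_union_right _ hid
      · rintro e ⟨heQ, hie⟩
        rcases (hmemQ e).1 heQ with rfl | ⟨heP, hec, hec'⟩
        · rfl
        · exact absurd (huniq e ⟨heP, hie⟩) (by rcases hdc with rfl | rfl <;> tauto)
    · push_neg at hdc
      refine ⟨d, ⟨(hmemQ d).2 (Or.inr ⟨hdP, hdc.1, hdc.2⟩), hid⟩, ?_⟩
      rintro e ⟨heQ, hie⟩
      rcases (hmemQ e).1 heQ with rfl | ⟨heP, -, -⟩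
      · rcases Finset.mem_union.1 hie with hie | hie
        · exact absurd (huniq c ⟨hc, hie⟩).symm hdc.1
        · exact absurd (huniq c' ⟨hc', hie⟩).symm hdc.2
      · exact huniq e ⟨heP, hie⟩

lemma good_eq (σ : Fin n → Fin K) (hσ : Function.Surjective σ)
    {P : Finset (Finset (Fin n))} (hP : IsGood σ P) (hcard : P.card = K) :
    P = Finset.univ.image (fun k : Fin K => Finset.univ.filter (fun i => σ i = k)) := by
  classical
  obtain ⟨hne, hhom, hpart⟩ := hP
  rcases isEmpty_or_nonempty (Fin n) with hE | hNE
  · have hPempty : P = ∅ := by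
      rw [Finset.eq_empty_iff_forall_notMem]
      intro c hcP
      obtain ⟨i, -⟩ := hne c hcP
      exact hE.elim i
    have hK0 : K = 0 := by rw [← hcard, hPempty]; rfl
    subst hK0
    simp [hPempty]
  · obtain ⟨i0⟩ := hNE
    set g : Finset (Fin n) → Fin K :=
      fun a => σ (if h : a.Nonempty then h.choose else i0) with hg
    have hgval : ∀ a ∈ P, ∀ i ∈ a, g a = σ i := by
      intro a ha i hi
      have hna : a.Nonempty := hne a ha
      have : g a = σ hna.choose := by
        rw [hg]; simp only [dif_pos hna]
      rw [this]
      exact hhom a ha _ hna.choose_spec i hi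
    have hsurj : ∀ k : Fin K, ∃ c ∈ P, g c = k := by
      intro k
      obtain ⟨i, rfl⟩ := hσ k
      obtain ⟨c, ⟨hcP, hic⟩, -⟩ := hpart i
      exact ⟨c, hcP, hgval c hcP i hic⟩
    have himg : P.image g = Finset.univ := by
      apply Finset.eq_univ_of_forall
      intro k
      obtain ⟨c, hcP, hgc⟩ := hsurj k
      exact Finset.mem_image.2 ⟨c, hcP, hgc⟩
    have hinj : Set.InjOn g ↑P := by
      rw [← Finset.card_image_iff]
      rw [himg, hcard, Finset.card_univ, Fintype.card_fin]
    have key : ∀ c ∈ P, ∀ i ∈ c,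
        c = Finset.univ.filter (fun j => σ j = σ i) := by
      intro c hcP i hic
      apply Finset.Subset.antisymm
      · intro j hj
        exact Finset.mem_filter.2 ⟨Finset.mem_univ j, hhom c hcP j hj i hic⟩
      · intro j hj
        have hji : σ j = σ i := (Finset.mem_filter.1 hj).2
        obtain ⟨d, ⟨hdP, hjd⟩, -⟩ := hpart j
        have : g d = g c := by
          rw [hgval d hdP j hjd, hgval c hcP i hic, hji]
        have hdc : d = c := hinj hdP hcP this
        rwa [← hdc]
    apply Finset.Subset.antisymm
    · intro c hcP
      obtain ⟨i, hic⟩ := hne c hcP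
      exact Finset.mem_image.2 ⟨σ i, Finset.mem_univ _, (key c hcP i hic).symm⟩
    · intro x hx
      obtain ⟨k, -, rfl⟩ := Finset.mem_image.1 hx
      obtain ⟨i, rfl⟩ := hσ k
      obtain ⟨c, ⟨hcP, hic⟩, -⟩ := hpart i
      have := key c hcP i hic
      rw [← this]
      exact hcP

end Aux

/-- Complete-linkage agglomerative clustering, started from singletons and stopped
when exactly `K` clusters remain, recovers a partition whose within-cluster
distances are at most `δ` and whose between-cluster distances exceed `δ`. -/
theorem stmt_7 {M : Type*} [MetricSpace M] {n K : ℕ}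
    (p : Fin n → M) (σ : Fin n → Fin K) (δ : ℝ)
    (hne : Function.Surjective σ)
    (hwithin : ∀ i j, σ i = σ j → dist (p i) (p j) ≤ δ)
    (hbetween : ∀ i j, σ i ≠ σ j → δ < dist (p i) (p j))
    (P : Finset (Finset (Fin n)))
    (hrun : Relation.ReflTransGen (AgglomStep (completeLink p))
      (Finset.univ.image (fun i : Fin n => ({i} : Finset (Fin n)))) P)
    (hcard : P.card = K) :
    P = Finset.univ.image (fun k : Fin K => Finset.univ.filter (fun i => σ i = k)) := by
  classical
  have main : ∀ R : Finset (Finset (Fin n)),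
      Relation.ReflTransGen (AgglomStep (completeLink p))
        (Finset.univ.image (fun i : Fin n => ({i} : Finset (Fin n)))) R →
      K ≤ R.card → IsGood σ R := by
    intro R h
    induction h with
    | refl => intro _; exact good_start σ
    | tail hQR hstep ih =>
        intro hKR
        have hle := step_card_le hstep
        exact step_good p σ δ hwithin hbetween (ih (by omega)) (by omega) hstep
  exact good_eq σ hne (main P hrun (le_of_eq hcard.symm)) hcard
end

section
/- Let (M, ρ) be a metric space, and let σ': [n] → [K] be a partition of points p_1, …, p_n ∈ M into K nonempty groups such that within-group distances are at most 2r and between-group distances exceed 2r. Then the farthest-first traversal, which picks an arbitrary first center and then iteratively picks as next center a point maximizing its distance to the already chosen centers, selects exactly one center from each of the K groups after K steps. -/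
/-- Farthest-first traversal picks one center per group: if within-group distances
are at most `2r` and between-group distances exceed `2r`, then a sequence of
centers `c_1, …, c_K` in which each `c_t` maximizes the distance to the
previously chosen centers hits every one of the `K` groups exactly once. -/
theorem stmt_9 {M : Type*} [MetricSpace M] {n K : ℕ}
    (p : Fin n → M) (σ' : Fin n → Fin K) (r : ℝ)
    (hne : Function.Surjective σ')
    (hwithin : ∀ i j, σ' i = σ' j → dist (p i) (p j) ≤ 2 * r)
    (hbetween : ∀ i j, σ' i ≠ σ' j → 2 * r < dist (p i) (p j))
    (c : Fin K → Fin n)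
    (hff : ∀ t : Fin K, ∀ j : Fin n,
      sInf {d : ℝ | ∃ s : Fin K, s < t ∧ d = dist (p j) (p (c s))}
        ≤ sInf {d : ℝ | ∃ s : Fin K, s < t ∧ d = dist (p (c t)) (p (c s))}) :
    Function.Injective (σ' ∘ c) := by
  suffices h : ∀ t s : Fin K, s < t → σ' (c s) ≠ σ' (c t) by
    intro a b hab
    rcases lt_trichotomy a b with h1 | h1 | h1
    · exact absurd hab (h b a h1)
    · exact h1
    · exact absurd hab.symm (h a b h1)
  intro t s hst heq
  -- the groups hit by centers before `t` form a set of size < K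
  set S : Finset (Fin K) :=
    (Finset.univ.filter (fun s : Fin K => s < t)).image (fun s => σ' (c s)) with hS
  have hcard : S.card < K := by
    refine lt_of_le_of_lt Finset.card_image_le ?_
    have hss : (Finset.univ.filter (fun s : Fin K => s < t)) ⊂ Finset.univ := by
      refine Finset.ssubset_univ_iff.mpr ?_
      intro hx
      have : t ∈ Finset.univ.filter (fun s : Fin K => s < t) := by rw [hx]; exact Finset.mem_univ t
      simp at this
    simpa using Finset.card_lt_card hss
  obtain ⟨g, hg⟩ : ∃ g : Fin K, g ∉ S := by
    by_contra hcon
    push_neg at hcon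
    have : S = Finset.univ := Finset.eq_univ_iff_forall.mpr hcon
    rw [this] at hcard
    simp at hcard
  obtain ⟨j, hj⟩ := hne g
  -- the distance set from j is finite and nonempty
  have hAeq : {d : ℝ | ∃ s : Fin K, s < t ∧ d = dist (p j) (p (c s))}
      = (fun s => dist (p j) (p (c s))) '' {s : Fin K | s < t} := by
    ext d; simp [eq_comm]
  have hAfin : ({d : ℝ | ∃ s : Fin K, s < t ∧ d = dist (p j) (p (c s))}).Finite := by
    rw [hAeq]; exact (Set.toFinite _).image _
  have hAne : ({d : ℝ | ∃ s : Fin K, s < t ∧ d = dist (p j) (p (c s))}).Nonempty :=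
    ⟨dist (p j) (p (c s)), s, hst, rfl⟩
  obtain ⟨s', hs't, hs'eq⟩ := hAne.csInf_mem hAfin
  have h1 : 2 * r < sInf {d : ℝ | ∃ s : Fin K, s < t ∧ d = dist (p j) (p (c s))} := by
    rw [hs'eq]
    refine hbetween _ _ ?_
    intro hc
    exact hg (Finset.mem_image.mpr ⟨s', by simp [hs't], hc.symm.trans hj⟩)
  have hBeq : {d : ℝ | ∃ s : Fin K, s < t ∧ d = dist (p (c t)) (p (c s))}
      = (fun s => dist (p (c t)) (p (c s))) '' {s : Fin K | s < t} := by
    ext d; simp [eq_comm]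
  have hBfin : ({d : ℝ | ∃ s : Fin K, s < t ∧ d = dist (p (c t)) (p (c s))}).Finite := by
    rw [hBeq]; exact (Set.toFinite _).image _
  have h2 : sInf {d : ℝ | ∃ s : Fin K, s < t ∧ d = dist (p (c t)) (p (c s))}
      ≤ dist (p (c t)) (p (c s)) :=
    csInf_le hBfin.bddBelow ⟨s, hst, rfl⟩
  have h3 : dist (p (c t)) (p (c s)) ≤ 2 * r := hwithin _ _ heq.symm
  have := hff t j
  linarith
end
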